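/- arXiv:1310.3052 — 2 statements merged into one kernel-verified Lean document; each statement's English description precedes it below -/
import Mathlib

section
/- Let λ : (0,∞) → ℝ be continuous and let γ < 1 be a real number. Suppose P_γ(x,y) and P_0(x,y) are both defined for all reals 0 < x ≤ y, take values in (0,1], satisfy P(x,x)=1, the semigroup property P(x,y) = P(x,z)·P(z,y) for 0 < x ≤ z ≤ y, and continuity of x ↦ P(x,y) on (0,y] for each fixed y; and that as h ↓ 0, P_γ(x,x+h) = 1 − (λ(x)/(1−γ))·h + o(h) while P_0(x,x+h) = 1 − λ(x)·h + o(h) for every x > 0. Then P_γ(x,y) = (P_0(x,y))^{1/(1−γ)} for all 0 < x ≤ y. -/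
open Filter Asymptotics Set
open scoped Topology

/-!
For `t < u < y` the semigroup property gives `log P(t,y) - log P(u,y) = log P(t,u)`, and the
rate expansion at `t` turns this into the right derivative `λ(t)/(1-γ)` (resp. `λ(t)`) of
`log P(·,y)` at `t`. Hence `log P_γ(·,y) - (1-γ)⁻¹ log P_0(·,y)` is continuous with vanishing
right derivative on `[x,y)`, so it is constant on `[x,y]`, and it vanishes at `y`.
-/

theorem Real.isLittleO_log_add_mul_of_isLittleO {α : Type*} {l : Filter α} {g Q : α → ℝ}
    {c : ℝ} (hg : Tendsto g l (𝓝 0)) (hQ : (fun a => Q a - (1 - c * g a)) =o[l] g) :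
    (fun a => Real.log (Q a) + c * g a) =o[l] g := by
  have hQ_sub_one : (fun a => Q a - 1) =O[l] g :=
    (hQ.isBigO.add ((isBigO_refl g l).const_mul_left (-c))).congr_left fun a => by ring
  have hQ_tendsto : Tendsto Q l (𝓝 1) := by
    simpa using (hQ_sub_one.trans_tendsto hg).add_const 1
  have hlog : (fun x : ℝ => Real.log x - (x - 1)) =o[𝓝 1] (fun x => x - 1) := by
    simpa using hasDerivAt_iff_isLittleO.1 (Real.hasDerivAt_log one_ne_zero)
  exact (((hlog.comp_tendsto hQ_tendsto).trans_isBigO hQ_sub_one).add hQ).congr_left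
    fun a => by simp only [Function.comp]; ring

theorem hasDerivWithinAt_log_of_mul_semigroup {P : ℝ → ℝ → ℝ}
    (hpos : ∀ x y : ℝ, 0 < x → x ≤ y → 0 < P x y)
    (hsemi : ∀ x z y : ℝ, 0 < x → x ≤ z → z ≤ y → P x y = P x z * P z y)
    {c t y : ℝ} (ht : 0 < t) (hty : t < y)
    (hexp : (fun h : ℝ => P t (t + h) - (1 - c * h)) =o[𝓝[>] (0:ℝ)] (fun h : ℝ => h)) :
    HasDerivWithinAt (fun u => Real.log (P u y)) c (Ici t) t := by
  rw [← hasDerivWithinAt_Ioi_iff_Ici, hasDerivWithinAt_iff_isLittleO]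
  have hshift : Tendsto (fun u : ℝ => u - t) (𝓝[>] t) (𝓝[>] 0) := by
    refine tendsto_nhdsWithin_of_tendsto_nhds_of_eventually_within _ ?_ ?_
    · simpa using ((continuous_sub_right t).tendsto t).mono_left nhdsWithin_le_nhds
    · filter_upwards [self_mem_nhdsWithin] with u (hu : t < u) using sub_pos.2 hu
  have hlog := Real.isLittleO_log_add_mul_of_isLittleO
    (tendsto_id.mono_left nhdsWithin_le_nhds) hexp
  refine (hlog.comp_tendsto hshift).neg_left.congr' ?_ EventuallyEq.rfl
  filter_upwards [Ioo_mem_nhdsGT hty] with u ⟨htu, huy⟩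
  have hsplit : Real.log (P t y) = Real.log (P t u) + Real.log (P u y) := by
    rw [hsemi t u y ht htu.le huy.le,
      Real.log_mul (hpos t u ht htu.le).ne' (hpos u y (ht.trans htu) huy.le).ne']
  simp only [Function.comp, id, add_sub_cancel, hsplit, smul_eq_mul]
  ring

theorem eq_rpow_of_rate_eq_mul {P Q : ℝ → ℝ → ℝ} {cP cQ : ℝ → ℝ} {r : ℝ}
    (hPpos : ∀ x y : ℝ, 0 < x → x ≤ y → 0 < P x y)
    (hQpos : ∀ x y : ℝ, 0 < x → x ≤ y → 0 < Q x y)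
    (hPdiag : ∀ x : ℝ, 0 < x → P x x = 1)
    (hQdiag : ∀ x : ℝ, 0 < x → Q x x = 1)
    (hPsemi : ∀ x z y : ℝ, 0 < x → x ≤ z → z ≤ y → P x y = P x z * P z y)
    (hQsemi : ∀ x z y : ℝ, 0 < x → x ≤ z → z ≤ y → Q x y = Q x z * Q z y)
    (hPcont : ∀ y : ℝ, 0 < y → ContinuousOn (fun x => P x y) (Ioc 0 y))
    (hQcont : ∀ y : ℝ, 0 < y → ContinuousOn (fun x => Q x y) (Ioc 0 y))
    (hPexp : ∀ x : ℝ, 0 < x →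
      (fun h : ℝ => P x (x + h) - (1 - cP x * h)) =o[𝓝[>] (0:ℝ)] (fun h : ℝ => h))
    (hQexp : ∀ x : ℝ, 0 < x →
      (fun h : ℝ => Q x (x + h) - (1 - cQ x * h)) =o[𝓝[>] (0:ℝ)] (fun h : ℝ => h))
    (hrate : ∀ x : ℝ, 0 < x → cP x = r * cQ x)
    {x y : ℝ} (hx : 0 < x) (hxy : x ≤ y) :
    P x y = Q x y ^ r := by
  have hy : 0 < y := hx.trans_le hxy
  set F : ℝ → ℝ := fun u => Real.log (P u y) - r * Real.log (Q u y)
  have hIcc : Icc x y ⊆ Ioc 0 y := fun u hu => ⟨hx.trans_le hu.1, hu.2⟩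
  have hcont : ContinuousOn F (Icc x y) :=
    (((hPcont y hy).mono hIcc).log fun u hu => (hPpos u y (hx.trans_le hu.1) hu.2).ne').sub
      (continuousOn_const.mul
        (((hQcont y hy).mono hIcc).log fun u hu => (hQpos u y (hx.trans_le hu.1) hu.2).ne'))
  have hderiv : ∀ u ∈ Ico x y, HasDerivWithinAt F 0 (Ici u) u := by
    rintro u ⟨hxu, huy⟩
    have hu : 0 < u := hx.trans_le hxu
    have hdP := hasDerivWithinAt_log_of_mul_semigroup hPpos hPsemi hu huy (hPexp u hu)
    have hdQ := hasDerivWithinAt_log_of_mul_semigroup hQpos hQsemi hu huy (hQexp u hu)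
    have hdF := hdP.sub (hdQ.const_mul r)
    rwa [hrate u hu, sub_self] at hdF
  have hFx : F x = 0 := by
    rw [← constant_of_has_deriv_right_zero hcont hderiv y (right_mem_Icc.2 hxy)]
    simp [F, hPdiag y hy, hQdiag y hy]
  calc P x y = Real.exp (Real.log (P x y)) := (Real.exp_log (hPpos x y hx hxy)).symm
    _ = Real.exp (Real.log (Q x y) * r) := by rw [mul_comm, sub_eq_zero.1 hFx]
    _ = Q x y ^ r := (Real.rpow_def_of_pos (hQpos x y hx hxy) r).symm

theorem stmt_2_general (lam : ℝ → ℝ) (γ : ℝ) (Pγ P₀ : ℝ → ℝ → ℝ)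
    (hPγpos : ∀ x y : ℝ, 0 < x → x ≤ y → 0 < Pγ x y)
    (hP₀pos : ∀ x y : ℝ, 0 < x → x ≤ y → 0 < P₀ x y)
    (hγdiag : ∀ x : ℝ, 0 < x → Pγ x x = 1)
    (h₀diag : ∀ x : ℝ, 0 < x → P₀ x x = 1)
    (hγsemi : ∀ x z y : ℝ, 0 < x → x ≤ z → z ≤ y → Pγ x y = Pγ x z * Pγ z y)
    (h₀semi : ∀ x z y : ℝ, 0 < x → x ≤ z → z ≤ y → P₀ x y = P₀ x z * P₀ z y)
    (hγcont : ∀ y : ℝ, 0 < y → ContinuousOn (fun x => Pγ x y) (Set.Ioc 0 y))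
    (h₀cont : ∀ y : ℝ, 0 < y → ContinuousOn (fun x => P₀ x y) (Set.Ioc 0 y))
    (hγexp : ∀ x : ℝ, 0 < x →
      (fun h : ℝ => Pγ x (x + h) - (1 - lam x / (1 - γ) * h)) =o[𝓝[>] (0:ℝ)]
        (fun h : ℝ => h))
    (h₀exp : ∀ x : ℝ, 0 < x →
      (fun h : ℝ => P₀ x (x + h) - (1 - lam x * h)) =o[𝓝[>] (0:ℝ)]
        (fun h : ℝ => h)) :
    ∀ x y : ℝ, 0 < x → x ≤ y → Pγ x y = P₀ x y ^ ((1:ℝ) / (1 - γ)) :=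
  fun _ _ hx hxy => eq_rpow_of_rate_eq_mul hPγpos hP₀pos hγdiag h₀diag hγsemi h₀semi hγcont
    h₀cont hγexp h₀exp (fun _ _ => (one_div_mul_eq_div _ _).symm) hx hxy

/-- Deterministic formulation of the power identity of Theorem 3.1:
if `P_γ` and `P_0` are multiplicative kernels with excursion-rate expansions
`1 - (λ(x)/(1-γ)) h + o(h)` and `1 - λ(x) h + o(h)` respectively, then
`P_γ(x,y) = P_0(x,y)^{1/(1-γ)}`. -/
theorem stmt_2 (lam : ℝ → ℝ) (γ : ℝ) (hγ : γ < 1) (Pγ P₀ : ℝ → ℝ → ℝ)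
    (hlam : ContinuousOn lam (Set.Ioi 0))
    (hPγpos : ∀ x y : ℝ, 0 < x → x ≤ y → 0 < Pγ x y)
    (hPγle : ∀ x y : ℝ, 0 < x → x ≤ y → Pγ x y ≤ 1)
    (hP₀pos : ∀ x y : ℝ, 0 < x → x ≤ y → 0 < P₀ x y)
    (hP₀le : ∀ x y : ℝ, 0 < x → x ≤ y → P₀ x y ≤ 1)
    (hγdiag : ∀ x : ℝ, 0 < x → Pγ x x = 1)
    (h₀diag : ∀ x : ℝ, 0 < x → P₀ x x = 1)
    (hγsemi : ∀ x z y : ℝ, 0 < x → x ≤ z → z ≤ y → Pγ x y = Pγ x z * Pγ z y)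
    (h₀semi : ∀ x z y : ℝ, 0 < x → x ≤ z → z ≤ y → P₀ x y = P₀ x z * P₀ z y)
    (hγcont : ∀ y : ℝ, 0 < y → ContinuousOn (fun x => Pγ x y) (Set.Ioc 0 y))
    (h₀cont : ∀ y : ℝ, 0 < y → ContinuousOn (fun x => P₀ x y) (Set.Ioc 0 y))
    (hγexp : ∀ x : ℝ, 0 < x →
      (fun h : ℝ => Pγ x (x + h) - (1 - lam x / (1 - γ) * h)) =o[𝓝[>] (0:ℝ)]
        (fun h : ℝ => h))
    (h₀exp : ∀ x : ℝ, 0 < x →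
      (fun h : ℝ => P₀ x (x + h) - (1 - lam x * h)) =o[𝓝[>] (0:ℝ)]
        (fun h : ℝ => h)) :
    ∀ x y : ℝ, 0 < x → x ≤ y → Pγ x y = P₀ x y ^ ((1:ℝ) / (1 - γ)) :=
  stmt_2_general lam γ Pγ P₀ hPγpos hP₀pos hγdiag h₀diag hγsemi h₀semi hγcont h₀cont hγexp h₀exp
end

section
/- Let γ < 1 be real, b ∈ ℝ, and let X : [0,∞) → ℝ be bounded above on every compact interval. Define U_t = max(0, sup_{0≤s≤t} X_s − b) and the refracted path Y_t = X_t − γ·U_t. Then for every t ≥ 0: max(b, sup_{0≤s≤t} Y_s) = b + (1−γ)·U_t. In particular, if X_0 = 0 and b = 0, then sup_{0≤s≤t} Y_s = (1−γ)·U_t. -/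
open Set

/-!
Since `X_s - b ≤ U_s`, every `Y_s = X_s - γ U_s` is at most `b + (1 - γ) U_s ≤ b + (1 - γ) U_t`
for `s ≤ t`. Conversely, `Y` dominates an increasing affine function of `X` on `[0, t]`: for
`γ ≥ 0` use `U_s ≤ U_t` to get `Y_s ≥ X_s - γ U_t`, for `γ < 0` use `U_s ≥ X_s - b` to get
`Y_s ≥ b + (1 - γ)(X_s - b)`. Taking suprema, once `U_t > 0` both bounds give
`sup_{s ≤ t} Y_s ≥ b + (1 - γ) U_t`.
-/

noncomputable section

lemma mul_add_le_csSup_image {α : Type*} {f g : α → ℝ} {A : Set α} {c d : ℝ}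
    (hA : A.Nonempty) (hg : BddAbove (g '' A)) (hf : BddAbove (f '' A)) (hc : 0 ≤ c)
    (h : ∀ x ∈ A, c * g x + d ≤ f x) :
    c * sSup (g '' A) + d ≤ sSup (f '' A) := by
  have hmono : Monotone fun y : ℝ => c * y + d := fun _ _ hxy => by dsimp only; gcongr
  rw [hmono.map_csSup_of_continuousAt (by fun_prop) (hA.image g) hg, ← image_comp]
  exact csSup_le (hA.image _) fun _ ⟨x, hx, hy⟩ =>
    hy ▸ (h x hx).trans (le_csSup hf (mem_image_of_mem f hx))

def runningSup (X : ℝ → ℝ) (t : ℝ) : ℝ := sSup (X '' Icc 0 t)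

def reflectedLocalTime (X : ℝ → ℝ) (b t : ℝ) : ℝ := max 0 (runningSup X t - b)

def refracted (X : ℝ → ℝ) (γ b s : ℝ) : ℝ := X s - γ * reflectedLocalTime X b s

section

variable {X : ℝ → ℝ} {γ b s t : ℝ}

lemma le_runningSup (hbdd : BddAbove (X '' Icc 0 t)) (hs : s ∈ Icc 0 t) :
    X s ≤ runningSup X t :=
  le_csSup hbdd (mem_image_of_mem X hs)

lemma runningSup_mono (hbdd : BddAbove (X '' Icc 0 t)) (hs : 0 ≤ s) (hst : s ≤ t) :
    runningSup X s ≤ runningSup X t :=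
  csSup_le_csSup hbdd ⟨X s, mem_image_of_mem X ⟨hs, le_rfl⟩⟩
    (image_mono (Icc_subset_Icc le_rfl hst))

lemma reflectedLocalTime_nonneg : 0 ≤ reflectedLocalTime X b t :=
  le_max_left _ _

lemma reflectedLocalTime_mono (hbdd : BddAbove (X '' Icc 0 t)) (hs : 0 ≤ s) (hst : s ≤ t) :
    reflectedLocalTime X b s ≤ reflectedLocalTime X b t :=
  max_le_max le_rfl (sub_le_sub_right (runningSup_mono hbdd hs hst) b)

lemma sub_le_reflectedLocalTime (hbdd : BddAbove (X '' Icc 0 t)) (hs : s ∈ Icc 0 t) :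
    X s - b ≤ reflectedLocalTime X b s :=
  have hbdd_s : BddAbove (X '' Icc 0 s) := hbdd.mono (image_mono (Icc_subset_Icc le_rfl hs.2))
  (sub_le_sub_right (le_runningSup hbdd_s ⟨hs.1, le_rfl⟩) b).trans (le_max_right _ _)

lemma refracted_le (hγ : γ ≤ 1) (hbdd : BddAbove (X '' Icc 0 t)) (hs : s ∈ Icc 0 t) :
    refracted X γ b s ≤ b + (1 - γ) * reflectedLocalTime X b t := by
  have hX := sub_le_reflectedLocalTime (b := b) hbdd hs
  have hU := reflectedLocalTime_mono (b := b) hbdd hs.1 hs.2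
  have hγU : (1 - γ) * reflectedLocalTime X b s ≤ (1 - γ) * reflectedLocalTime X b t :=
    mul_le_mul_of_nonneg_left hU (by linarith)
  unfold refracted
  linarith

lemma bddAbove_refracted (hγ : γ ≤ 1) (hbdd : BddAbove (X '' Icc 0 t)) :
    BddAbove (refracted X γ b '' Icc 0 t) :=
  ⟨_, forall_mem_image.2 fun _ hs => refracted_le hγ hbdd hs⟩

lemma le_max_runningSup_refracted (hγ : γ ≤ 1) (hbdd : BddAbove (X '' Icc 0 t)) (ht : 0 ≤ t) :
    b + (1 - γ) * reflectedLocalTime X b t ≤ max b (runningSup (refracted X γ b) t) := by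
  rcases le_total (runningSup X t) b with hS | hS
  · simp [reflectedLocalTime, max_eq_left (sub_nonpos.2 hS)]
  have hU : reflectedLocalTime X b t = runningSup X t - b :=
    max_eq_right (sub_nonneg.2 hS)
  refine le_max_of_le_right ?_
  have hne : (Icc 0 t).Nonempty := nonempty_Icc.2 ht
  have hbddY := bddAbove_refracted (b := b) hγ hbdd
  rcases le_total 0 γ with hγ0 | hγ0
  · have h : 1 * runningSup X t + -(γ * reflectedLocalTime X b t) ≤
        runningSup (refracted X γ b) t :=
      mul_add_le_csSup_image hne hbdd hbddY zero_le_one fun s hs => by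
        have hγU : γ * reflectedLocalTime X b s ≤ γ * reflectedLocalTime X b t :=
          mul_le_mul_of_nonneg_left (reflectedLocalTime_mono hbdd hs.1 hs.2) hγ0
        unfold refracted
        linarith
    linarith
  · have h : (1 - γ) * runningSup X t + γ * b ≤ runningSup (refracted X γ b) t :=
      mul_add_le_csSup_image hne hbdd hbddY (by linarith) fun s hs => by
        have hγU : -γ * (X s - b) ≤ -γ * reflectedLocalTime X b s :=
          mul_le_mul_of_nonneg_left (sub_le_reflectedLocalTime hbdd hs) (neg_nonneg.2 hγ0)
        unfold refracted
        linarith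
    rw [hU]
    linarith

theorem max_runningSup_refracted (hγ : γ ≤ 1) (hbdd : BddAbove (X '' Icc 0 t)) (ht : 0 ≤ t) :
    max b (runningSup (refracted X γ b) t) = b + (1 - γ) * reflectedLocalTime X b t := by
  refine le_antisymm (max_le ?_ ?_) (le_max_runningSup_refracted hγ hbdd ht)
  · exact le_add_of_nonneg_right (mul_nonneg (sub_nonneg.2 hγ) reflectedLocalTime_nonneg)
  · exact csSup_le (nonempty_Icc.2 ht |>.image _)
      (forall_mem_image.2 fun _ hs => refracted_le hγ hbdd hs)

end

end

/-- Key path relation for refraction from above at rate `γ < 1` starting at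
level `b`: with `U_t = 0 ∨ (sup_{s ≤ t} X_s - b)` and `Y = X - γ U`, one has
`b ∨ sup_{s ≤ t} Y_s = b + (1-γ) U_t`; in particular, if `X_0 = 0` and `b = 0`
then `sup_{s ≤ t} Y_s = (1-γ) U_t`. -/
theorem stmt_14 (γ : ℝ) (hγ : γ < 1) (b : ℝ) (X U Y : ℝ → ℝ)
    (hbdd : ∀ t : ℝ, 0 ≤ t → BddAbove (X '' Set.Icc 0 t))
    (hU : ∀ t : ℝ, U t = max 0 (sSup (X '' Set.Icc 0 t) - b))
    (hY : ∀ t : ℝ, Y t = X t - γ * U t) :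
    (∀ t : ℝ, 0 ≤ t →
      max b (sSup (Y '' Set.Icc 0 t)) = b + (1 - γ) * U t) ∧
    (X 0 = 0 → b = 0 →
      ∀ t : ℝ, 0 ≤ t → sSup (Y '' Set.Icc 0 t) = (1 - γ) * U t) := by
  obtain rfl : U = reflectedLocalTime X b := funext hU
  obtain rfl : Y = refracted X γ b := funext hY
  have key : ∀ t : ℝ, 0 ≤ t →
      max b (runningSup (refracted X γ b) t) = b + (1 - γ) * reflectedLocalTime X b t :=
    fun t ht => max_runningSup_refracted hγ.le (hbdd t ht) ht
  refine ⟨key, ?_⟩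
  rintro hX0 rfl t ht
  have hY0 : refracted X γ 0 0 = 0 := by
    simp [refracted, reflectedLocalTime, runningSup, hX0]
  have hnonneg : 0 ≤ runningSup (refracted X γ 0) t :=
    hY0.symm.le.trans (le_runningSup (bddAbove_refracted hγ.le (hbdd t ht)) ⟨le_rfl, ht⟩)
  have h := key t ht
  rw [max_eq_right hnonneg, zero_add] at h
  exact h
end
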